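/- Let f(y) = 1 + bδ φ_Y((y-1/2)/δ) on [0,1] with φ_Y the hat function, revenue R(y) = y(1-F(y)), and optimal price p* = argmax_{y∈[0,1]} R(y). Suppose C* ∈ (0,2), 0 < b < 4 - 2C*, and δ > 0 is sufficiently small. Then p* ∈ (1/2 - δ, 1/2 - bδ/8); in particular |p* - 1/2| ≥ bδ/8, and p* lies in the interior of [0,1] in a region where R is twice differentiable. -/

import Mathlib

/-
The density equals 1 off [1/2 - δ, 1/2 + 3δ] and is affine on each of the three pieces of the
hat, so F is an explicit quadratic on each piece and so is the marginal revenue R' = 1 - F - y f.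
On [0, 1/2 - δ] it is 1 - 2y > 0; on [1/2 - bδ/8, 1] it is negative as soon as δ < (4 - b)/32,
the critical value being R'(1/2 - bδ/8) = b(b - 4)δ/16 + O(δ²). A maximiser of R on [0, 1] thus
avoids both intervals: inside them R is strictly monotone, and at their inner endpoints it would
be an interior critical point with R' ≠ 0. Near the maximiser the density is affine, so R' is
differentiable there.
-/

open Set

noncomputable def phiY (t : ℝ) : ℝ :=
  if t ∈ Set.Icc (-1:ℝ) 0 then t + 1
  else if t ∈ Set.Icc (0:ℝ) 2 then -t + 1
  else if t ∈ Set.Icc (2:ℝ) 3 then t - 3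
  else 0

open Filter Topology

theorem phiY_of_le_neg_one {t : ℝ} (ht : t ≤ -1) : phiY t = 0 := by
  unfold phiY; grind

theorem phiY_of_three_le {t : ℝ} (ht : 3 ≤ t) : phiY t = 0 := by
  unfold phiY; grind

theorem phiY_of_mem_Icc_neg_one_zero {t : ℝ} (ht : t ∈ Icc (-1) 0) : phiY t = t + 1 := by
  rw [phiY, if_pos ht]

theorem phiY_of_mem_Icc_zero_two {t : ℝ} (ht : t ∈ Icc 0 2) : phiY t = 1 - t := by
  unfold phiY; grind

theorem phiY_of_mem_Icc_two_three {t : ℝ} (ht : t ∈ Icc 2 3) : phiY t = t - 3 := by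
  unfold phiY; grind

theorem phiY_eq_max_sub_max (t : ℝ) :
    phiY t = max 0 (min (t + 1) (1 - t)) - max 0 (min (t - 1) (3 - t)) := by
  unfold phiY; grind

@[fun_prop]
theorem continuous_phiY : Continuous phiY := by
  rw [funext phiY_eq_max_sub_max]
  fun_prop

theorem integral_eq_of_hasDerivAt_of_integral_eq {f G : ℝ → ℝ} (hf : Continuous f) {a y : ℝ}
    (hay : a ≤ y) (hG : ∀ t ∈ Icc a y, HasDerivAt G (f t) t) (ha : ∫ t in (0:ℝ)..a, f t = G a) :
    ∫ t in (0:ℝ)..y, f t = G y := by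
  rw [← intervalIntegral.integral_add_adjacent_intervals (hf.intervalIntegrable 0 a)
    (hf.intervalIntegrable a y), ha, intervalIntegral.integral_eq_sub_of_hasDerivAt
    (by rwa [uIcc_of_le hay]) (hf.intervalIntegrable a y)]
  ring

theorem hasDerivAt_add_mul_sq (k m t : ℝ) :
    HasDerivAt (fun y => y + k / 2 * (y - m) ^ 2) (1 + k * (t - m)) t := by
  refine ((hasDerivAt_id' t).add ((((hasDerivAt_id' t).sub_const m).pow 2).const_mul (k / 2)))
    |>.congr_deriv ?_
  ring

theorem hasDerivAt_mul_one_sub_integral {f : ℝ → ℝ} (hf : Continuous f) (y : ℝ) :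
    HasDerivAt (fun x => x * (1 - ∫ t in (0:ℝ)..x, f t))
      (1 - (∫ t in (0:ℝ)..y, f t) - y * f y) y := by
  refine ((hasDerivAt_id' y).mul ((hf.integral_hasStrictDerivAt 0 y).hasDerivAt.const_sub 1))
    |>.congr_deriv ?_
  ring

theorem mem_Ioo_of_isMaxOn_of_hasDerivAt {R R' : ℝ → ℝ} {lo hi a c p : ℝ}
    (hR : ∀ x, HasDerivAt R (R' x) x) (hla : lo < a) (hac : a < c) (hch : c < hi)
    (hpos : ∀ x ∈ Icc lo a, 0 < R' x) (hneg : ∀ x ∈ Icc c hi, R' x < 0)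
    (hp : p ∈ Icc lo hi) (hmax : IsMaxOn R (Icc lo hi) p) : p ∈ Ioo a c := by
  have hcrit : p ∈ Ioo lo hi → R' p = 0 := fun hp' =>
    (hmax.isLocalMax (Icc_mem_nhds hp'.1 hp'.2)).hasDerivAt_eq_zero (hR p)
  have hcont : Continuous R := continuous_iff_continuousAt.2 fun x => (hR x).continuousAt
  have hderiv (s : Set ℝ) (x : ℝ) : HasDerivWithinAt R (R' x) s x := (hR x).hasDerivWithinAt
  constructor
  · by_contra! hpa
    rcases hpa.lt_or_eq with hpa | rfl
    · have hmono := strictMonoOn_of_hasDerivWithinAt_pos (convex_Icc lo a) hcont.continuousOn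
        (fun x _ => hderiv _ x) (fun x hx => hpos x (interior_subset hx))
      exact (hmono ⟨hp.1, hpa.le⟩ ⟨hla.le, le_rfl⟩ hpa).not_ge
        (hmax ⟨hla.le, (hac.trans hch).le⟩)
    · exact (hpos _ ⟨hp.1, le_rfl⟩).ne' (hcrit ⟨hla, hac.trans hch⟩)
  · by_contra! hcp
    rcases hcp.lt_or_eq with hcp | rfl
    · have hanti := strictAntiOn_of_hasDerivWithinAt_neg (convex_Icc c hi) hcont.continuousOn
        (fun x _ => hderiv _ x) (fun x hx => hneg x (interior_subset hx))
      exact (hanti ⟨le_rfl, hch.le⟩ ⟨hcp.le, hp.2⟩ hcp).not_ge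
        (hmax ⟨(hla.trans hac).le, hch.le⟩)
    · exact (hneg _ ⟨le_rfl, hch.le⟩).ne (hcrit ⟨hla.trans hac, hch⟩)

noncomputable def hatDensity (b δ y : ℝ) : ℝ := 1 + b * δ * phiY ((y - 1/2) / δ)

noncomputable def hatCDF (b δ y : ℝ) : ℝ := ∫ t in (0:ℝ)..y, hatDensity b δ t

noncomputable def hatMarginalRevenue (b δ y : ℝ) : ℝ :=
  1 - hatCDF b δ y - y * hatDensity b δ y

section HatDensity

variable {b δ y : ℝ}

theorem continuous_hatDensity : Continuous (hatDensity b δ) := by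
  unfold hatDensity
  fun_prop

theorem hatDensity_of_le (hδ : 0 < δ) (hy : y ≤ 1/2 - δ) : hatDensity b δ y = 1 := by
  rw [hatDensity, phiY_of_le_neg_one (by rw [div_le_iff₀ hδ]; linarith), mul_zero, add_zero]

theorem hatDensity_of_ge (hδ : 0 < δ) (hy : 1/2 + 3 * δ ≤ y) : hatDensity b δ y = 1 := by
  rw [hatDensity, phiY_of_three_le (by rw [le_div_iff₀ hδ]; linarith), mul_zero, add_zero]

theorem hatDensity_of_mem_rise (hδ : 0 < δ) (hy : y ∈ Icc (1/2 - δ) (1/2)) :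
    hatDensity b δ y = 1 + b * (y - (1/2 - δ)) := by
  rw [hatDensity, phiY_of_mem_Icc_neg_one_zero
    ⟨by rw [le_div_iff₀ hδ]; linarith [hy.1], by rw [div_le_iff₀ hδ]; linarith [hy.2]⟩]
  field_simp
  ring

theorem hatDensity_of_mem_fall (hδ : 0 < δ) (hy : y ∈ Icc (1/2) (1/2 + 2 * δ)) :
    hatDensity b δ y = 1 + -b * (y - (1/2 + δ)) := by
  rw [hatDensity, phiY_of_mem_Icc_zero_two
    ⟨by rw [le_div_iff₀ hδ]; linarith [hy.1], by rw [div_le_iff₀ hδ]; linarith [hy.2]⟩]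
  field_simp
  ring

theorem hatDensity_of_mem_recover (hδ : 0 < δ) (hy : y ∈ Icc (1/2 + 2 * δ) (1/2 + 3 * δ)) :
    hatDensity b δ y = 1 + b * (y - (1/2 + 3 * δ)) := by
  rw [hatDensity, phiY_of_mem_Icc_two_three
    ⟨by rw [le_div_iff₀ hδ]; linarith [hy.1], by rw [div_le_iff₀ hδ]; linarith [hy.2]⟩]
  field_simp
  ring

theorem hatCDF_of_mem_left (hδ : 0 < δ) (hy : y ∈ Icc 0 (1/2 - δ)) : hatCDF b δ y = y :=
  integral_eq_of_hasDerivAt_of_integral_eq continuous_hatDensity hy.1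
    (fun t ht => (hasDerivAt_id' t).congr_deriv (hatDensity_of_le hδ (ht.2.trans hy.2)).symm)
    intervalIntegral.integral_same

theorem hatCDF_of_mem_rise (hδ : 0 < δ) (hδ' : δ ≤ 1/2) (hy : y ∈ Icc (1/2 - δ) (1/2)) :
    hatCDF b δ y = y + b / 2 * (y - (1/2 - δ)) ^ 2 :=
  integral_eq_of_hasDerivAt_of_integral_eq continuous_hatDensity hy.1
    (fun t ht => (hasDerivAt_add_mul_sq b _ t).congr_deriv
      (hatDensity_of_mem_rise hδ (Icc_subset_Icc_right hy.2 ht)).symm)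
    (by rw [← hatCDF, hatCDF_of_mem_left hδ ⟨by linarith, le_rfl⟩]; ring)

theorem hatCDF_of_mem_fall (hδ : 0 < δ) (hδ' : δ ≤ 1/2) (hy : y ∈ Icc (1/2) (1/2 + 2 * δ)) :
    hatCDF b δ y = y + -b / 2 * (y - (1/2 + δ)) ^ 2 + b * δ ^ 2 :=
  integral_eq_of_hasDerivAt_of_integral_eq continuous_hatDensity hy.1
    (fun t ht => ((hasDerivAt_add_mul_sq (-b) _ t).add_const _).congr_deriv
      (hatDensity_of_mem_fall hδ (Icc_subset_Icc_right hy.2 ht)).symm)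
    (by rw [← hatCDF, hatCDF_of_mem_rise hδ hδ' ⟨by linarith, le_rfl⟩]; ring)

theorem hatCDF_of_mem_recover (hδ : 0 < δ) (hδ' : δ ≤ 1/2)
    (hy : y ∈ Icc (1/2 + 2 * δ) (1/2 + 3 * δ)) :
    hatCDF b δ y = y + b / 2 * (y - (1/2 + 3 * δ)) ^ 2 :=
  integral_eq_of_hasDerivAt_of_integral_eq continuous_hatDensity hy.1
    (fun t ht => (hasDerivAt_add_mul_sq b _ t).congr_deriv
      (hatDensity_of_mem_recover hδ (Icc_subset_Icc_right hy.2 ht)).symm)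
    (by rw [← hatCDF, hatCDF_of_mem_fall hδ hδ' ⟨by linarith, le_rfl⟩]; ring)

theorem hatCDF_of_ge (hδ : 0 < δ) (hδ' : δ ≤ 1/2) (hy : 1/2 + 3 * δ ≤ y) : hatCDF b δ y = y :=
  integral_eq_of_hasDerivAt_of_integral_eq continuous_hatDensity hy
    (fun t ht => (hasDerivAt_id' t).congr_deriv (hatDensity_of_ge hδ ht.1).symm)
    (by rw [← hatCDF, hatCDF_of_mem_recover hδ hδ' ⟨by linarith, le_rfl⟩]; ring)

theorem hatMarginalRevenue_pos (hδ : 0 < δ) (hy : y ∈ Icc 0 (1/2 - δ)) :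
    0 < hatMarginalRevenue b δ y := by
  rw [hatMarginalRevenue, hatCDF_of_mem_left hδ hy, hatDensity_of_le hδ hy.2]
  linarith [hy.2]

theorem hatMarginalRevenue_neg (hb : 0 < b) (hδ : 0 < δ) (hδb : δ < (4 - b) / 32)
    (hy : y ∈ Icc (1/2 - b * δ / 8) 1) : hatMarginalRevenue b δ y < 0 := by
  obtain ⟨hy₁, hy₂⟩ := hy
  have hδ' : δ ≤ 1/2 := by linarith
  have hbδ := mul_pos hb hδ
  have hbδ' : b * δ < 4 * δ := mul_lt_mul_of_pos_right (by linarith) hδ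
  rw [hatMarginalRevenue]
  rcases le_total y (1/2) with h₁ | h₁
  · have hy : y ∈ Icc (1/2 - δ) (1/2) := ⟨by linarith, h₁⟩
    rw [hatCDF_of_mem_rise hδ hδ' hy, hatDensity_of_mem_rise hδ hy]
    nlinarith [mul_nonneg hb.le (sq_nonneg (y - (1/2 - δ))),
      mul_nonneg hbδ.le (sub_nonneg.2 hy₁)]
  rcases le_total y (1/2 + 2 * δ) with h₂ | h₂
  · rw [hatCDF_of_mem_fall hδ hδ' ⟨h₁, h₂⟩, hatDensity_of_mem_fall hδ ⟨h₁, h₂⟩]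
    nlinarith [mul_nonneg (mul_nonneg hb.le (sub_nonneg.2 h₁)) (sub_nonneg.2 h₂),
      mul_nonneg hbδ.le (sub_nonneg.2 h₁)]
  rcases le_total y (1/2 + 3 * δ) with h₃ | h₃
  · rw [hatCDF_of_mem_recover hδ hδ' ⟨h₂, h₃⟩, hatDensity_of_mem_recover hδ ⟨h₂, h₃⟩]
    nlinarith [mul_nonneg hbδ.le (sub_nonneg.2 h₃), mul_nonneg hb.le (sub_nonneg.2 h₃),
      mul_nonneg hb.le (sq_nonneg (y - (1/2 + 3 * δ)))]
  · rw [hatCDF_of_ge hδ hδ' h₃, hatDensity_of_ge hδ h₃]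
    linarith

theorem differentiableAt_hatMarginalRevenue (hδ : 0 < δ) (hy : y ∈ Ioo (1/2 - δ) (1/2)) :
    DifferentiableAt ℝ (hatMarginalRevenue b δ) y := by
  have hF : DifferentiableAt ℝ (hatCDF b δ) y :=
    (continuous_hatDensity.integral_hasStrictDerivAt 0 y).hasDerivAt.differentiableAt
  have hf : DifferentiableAt ℝ (hatDensity b δ) y := by
    have hloc : hatDensity b δ =ᶠ[𝓝 y] fun t => 1 + b * (t - (1/2 - δ)) := by
      filter_upwards [Ioo_mem_nhds hy.1 hy.2] with t ht
      exact hatDensity_of_mem_rise hδ (Ioo_subset_Icc_self ht)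
    exact hloc.differentiableAt_iff.2 (by fun_prop)
  exact (hF.const_sub 1).sub (differentiableAt_id.mul hf)

end HatDensity

theorem stmt6 (Cs b : ℝ) (hC : Cs ∈ Ioo (0:ℝ) 2) (hb : b ∈ Ioo 0 (4 - 2 * Cs)) :
    ∃ δ₀ > (0:ℝ), ∀ δ : ℝ, 0 < δ → δ < δ₀ →
      ∀ f F R : ℝ → ℝ,
        (∀ y, f y = 1 + b * δ * phiY ((y - 1/2) / δ)) →
        (∀ y, F y = ∫ t in (0:ℝ)..y, f t) →
        (∀ y, R y = y * (1 - F y)) →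
        ∀ ps : ℝ, ps ∈ Icc (0:ℝ) 1 → IsMaxOn R (Icc (0:ℝ) 1) ps →
          ps ∈ Ioo (1/2 - δ) (1/2 - b * δ / 8) ∧
          b * δ / 8 ≤ |ps - 1/2| ∧
          ∃ ε > (0:ℝ), ∀ y ∈ Ioo (ps - ε) (ps + ε), DifferentiableAt ℝ (deriv R) y := by
  obtain ⟨hb0, hbC⟩ := hb
  have hb4 : b < 4 := by linarith [hC.1]
  refine ⟨(4 - b) / 32, by linarith, fun δ hδ hδb f F R hf hF hR ps hps hmax => ?_⟩
  obtain rfl : f = hatDensity b δ := funext hf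
  have hReq : R = fun y => y * (1 - ∫ t in (0:ℝ)..y, hatDensity b δ t) := by
    funext y; rw [hR, hF]
  have hR' (y : ℝ) : HasDerivAt R (hatMarginalRevenue b δ y) y :=
    hReq ▸ hasDerivAt_mul_one_sub_integral continuous_hatDensity y
  have hbδ₀ : 0 < b * δ := mul_pos hb0 hδ
  have hbδ : b * δ < 4 * δ := mul_lt_mul_of_pos_right hb4 hδ
  have hps' : ps ∈ Ioo (1/2 - δ) (1/2 - b * δ / 8) :=
    mem_Ioo_of_isMaxOn_of_hasDerivAt hR' (by linarith) (by linarith) (by linarith)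
      (fun y hy => hatMarginalRevenue_pos hδ hy) (fun y hy => hatMarginalRevenue_neg hb0 hδ hδb hy)
      hps hmax
  refine ⟨hps', by rw [abs_of_neg (by linarith [hps'.2])]; linarith [hps'.2], ?_⟩
  obtain ⟨ε, hε, hball⟩ := Metric.isOpen_iff.1 isOpen_Ioo ps
    (⟨hps'.1, by linarith [hps'.2]⟩ : ps ∈ Ioo (1/2 - δ) (1/2))
  refine ⟨ε, hε, fun y hy => ?_⟩
  rw [funext fun y => (hR' y).deriv]
  exact differentiableAt_hatMarginalRevenue hδ (hball (Real.ball_eq_Ioo ps ε ▸ hy))
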